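/- Fix a Newton diagram datum: an integer n ≥ 1 and lattice points (P₀,Q₀),…,(Pₙ,Qₙ) ∈ ℤ² with P₀ = 0, Qₙ = 0, P₀ < P₁ < … < Pₙ, Q₀ > Q₁ > … > Qₙ, pᵢ = Pᵢ − Pᵢ₋₁, qᵢ = Qᵢ₋₁ − Qᵢ, q₁/p₁ > … > qₙ/pₙ, and gcd(pᵢ,qᵢ) = 1 for each i. Let Γ₋ be the closure of (ℝ≥0)² \ (conv{(P₀,Q₀),…,(Pₙ,Qₙ)} + (ℝ≥0)²), and let Γ be the union of the segments from (Pᵢ₋₁,Qᵢ₋₁) to (Pᵢ,Qᵢ), i = 1,…,n. Then the number of pairs (i,j) of nonnegative integers such that S(i,j) = [i,i+1] × [j,j+1] ⊆ Γ₋ and at least one vertex of S(i,j) lies on Γ equals n − 1. -/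

import Mathlib

/-!
Each edge `k` of `Γ` has the normal `(qₖ, pₖ)` with positive entries, and since the slopes
decrease, every vertex satisfies `qₖ Pₘ + pₖ Qₘ ≥ qₖ Pₖ + pₖ Qₖ`. Hence
`conv{(Pᵢ,Qᵢ)} + (ℝ≥0)²` is the part of the quadrant lying weakly above every edge line, and
`Γ₋` lies in the closed set of points weakly below some edge line. As `gcd(pₖ,qₖ) = 1`, the
only lattice points on `Γ` are the vertices.

If `S(i,j) ⊆ Γ₋` has a vertex `v` on `Γ`, its upper right corner `c` lies weakly below some
edge line while the vertex `v ≤ c` of `Γ` lies weakly above it, so `v = c = (Pₛ,Qₛ)`, and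
`0 < s < n` because `i, j ≥ 0`. Conversely, for `0 < s < n` the open square with upper right corner `(Pₛ,Qₛ)`
lies strictly below the line of edge `s + 1`, so its closure `S(Pₛ - 1, Qₛ - 1)` lies in `Γ₋`.
The squares in question are therefore in bijection with `1 ≤ s ≤ n - 1`.
-/
open Set MeasureTheory Pointwise

/-- The unit lattice square `S(i,j) = [i,i+1] × [j,j+1] ⊆ ℝ²`. -/
def unitSq (i j : ℤ) : Set (ℝ × ℝ) :=
  Set.Icc (i : ℝ) (i + 1) ×ˢ Set.Icc (j : ℝ) (j + 1)

/-- The four corners of the unit lattice square `S(i,j)`. -/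
def unitSqVertices (i j : ℤ) : Set (ℝ × ℝ) :=
  {((i : ℝ), (j : ℝ)), ((i : ℝ) + 1, (j : ℝ)), ((i : ℝ), (j : ℝ) + 1),
    ((i : ℝ) + 1, (j : ℝ) + 1)}

/-- The region `Γ₋`: the closure of `(ℝ≥0)² \ (conv{(P₀,Q₀),…,(Pₙ,Qₙ)} + (ℝ≥0)²)`,
where `+` denotes the Minkowski sum. -/
def gammaMinus (n : ℕ) (P Q : ℕ → ℤ) : Set (ℝ × ℝ) :=
  closure ((Set.Ici (0 : ℝ) ×ˢ Set.Ici (0 : ℝ)) \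
    (convexHull ℝ {x : ℝ × ℝ | ∃ i ≤ n, x = ((P i : ℝ), (Q i : ℝ))} +
      Set.Ici (0 : ℝ) ×ˢ Set.Ici (0 : ℝ)))

/-- The Newton boundary `Γ`: the union of the segments from `(Pᵢ₋₁,Qᵢ₋₁)` to `(Pᵢ,Qᵢ)`,
`i = 1,…,n`. -/
def newtonBoundary (n : ℕ) (P Q : ℕ → ℤ) : Set (ℝ × ℝ) :=
  ⋃ i ∈ Finset.Icc 1 n,
    segment ℝ ((P (i - 1) : ℝ), (Q (i - 1) : ℝ)) ((P i : ℝ), (Q i : ℝ))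

lemma eq_or_eq_of_lattice_mem_segment {a₁ a₂ b₁ b₂ x₁ x₂ : ℤ}
    (hgcd : Int.gcd (b₁ - a₁) (b₂ - a₂) = 1)
    (hx : ((x₁ : ℝ), (x₂ : ℝ)) ∈ segment ℝ ((a₁ : ℝ), (a₂ : ℝ)) ((b₁ : ℝ), (b₂ : ℝ))) :
    (x₁ = a₁ ∧ x₂ = a₂) ∨ (x₁ = b₁ ∧ x₂ = b₂) := by
  rw [segment_eq_image'] at hx
  obtain ⟨t, ⟨ht₀, ht₁⟩, hxt⟩ := hx
  simp only [Prod.ext_iff, Prod.fst_add, Prod.snd_add, Prod.smul_fst, Prod.smul_snd,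
    Prod.fst_sub, Prod.snd_sub, smul_eq_mul] at hxt
  -- Bézout: `t = t * 1` is an integer combination of the integer coordinates of `x - a`.
  have hbez := Int.gcd_eq_gcd_ab (b₁ - a₁) (b₂ - a₂)
  rw [hgcd] at hbez
  set A := Int.gcdA (b₁ - a₁) (b₂ - a₂)
  set B := Int.gcdB (b₁ - a₁) (b₂ - a₂)
  have ht : t = ((x₁ - a₁) * A + (x₂ - a₂) * B : ℤ) := by
    have hbez' : (1 : ℝ) = (b₁ - a₁) * A + (b₂ - a₂) * B := by exact_mod_cast hbez
    push_cast
    rw [← hxt.1, ← hxt.2]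
    linear_combination t * hbez'
  rw [ht] at ht₀ ht₁ hxt
  have hm : (x₁ - a₁) * A + (x₂ - a₂) * B = 0 ∨ (x₁ - a₁) * A + (x₂ - a₂) * B = 1 := by
    have h₀ : 0 ≤ (x₁ - a₁) * A + (x₂ - a₂) * B := by exact_mod_cast ht₀
    have h₁ : (x₁ - a₁) * A + (x₂ - a₂) * B ≤ 1 := by exact_mod_cast ht₁
    omega
  rcases hm with hm | hm
  · left
    rw [hm] at hxt
    simp only [Int.cast_zero, zero_mul, add_zero] at hxt
    exact ⟨by exact_mod_cast hxt.1.symm, by exact_mod_cast hxt.2.symm⟩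
  · right
    rw [hm] at hxt
    simp only [Int.cast_one, one_mul, add_sub_cancel] at hxt
    exact ⟨by exact_mod_cast hxt.1.symm, by exact_mod_cast hxt.2.symm⟩

lemma strictMono_linear_form {a b : ℝ} (ha : 0 < a) (hb : 0 < b) :
    StrictMono fun x : ℝ × ℝ => a * x.1 + b * x.2 := by
  intro x y hxy
  rcases Prod.lt_iff.mp hxy with ⟨h₁, h₂⟩ | ⟨h₁, h₂⟩
  · have := mul_lt_mul_of_pos_left h₁ ha
    have := mul_le_mul_of_nonneg_left h₂ hb.le
    dsimp only
    linarith
  · have := mul_le_mul_of_nonneg_left h₁ ha.le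
    have := mul_lt_mul_of_pos_left h₂ hb
    dsimp only
    linarith

lemma mem_segment_add_quadrant {a b x : ℝ × ℝ} (hab : a.1 < b.1) (hax : a.1 ≤ x.1)
    (hxb : x.1 ≤ b.1)
    (hx : (a.2 - b.2) * a.1 + (b.1 - a.1) * a.2 ≤ (a.2 - b.2) * x.1 + (b.1 - a.1) * x.2) :
    x ∈ segment ℝ a b + Ici 0 ×ˢ Ici 0 := by
  have hw : 0 < b.1 - a.1 := sub_pos.2 hab
  set t := (x.1 - a.1) / (b.1 - a.1)
  have ht : t * (b.1 - a.1) = x.1 - a.1 := div_mul_cancel₀ _ hw.ne'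
  refine ⟨a + t • (b - a), ?_, x - (a + t • (b - a)), ?_, add_sub_cancel _ _⟩
  · rw [segment_eq_image']
    exact ⟨t, ⟨div_nonneg (by linarith) hw.le, div_le_one_of_le₀ (by linarith) hw.le⟩, rfl⟩
  · simp only [mem_prod, mem_Ici, Prod.fst_sub, Prod.snd_sub, Prod.fst_add, Prod.snd_add,
      Prod.smul_fst, Prod.smul_snd, Prod.fst_sub, smul_eq_mul]
    refine ⟨by linarith, ?_⟩
    have : 0 ≤ (b.1 - a.1) * (x.2 - (a.2 + t * (b.2 - a.2))) := by
      linear_combination hx + (b.2 - a.2) * ht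
    nlinarith

lemma exists_le_le_of_lt {f : ℕ → ℝ} {n : ℕ} {x : ℝ} (h₀ : f 0 ≤ x) (hn : x < f n) :
    ∃ k, 1 ≤ k ∧ k ≤ n ∧ f (k - 1) ≤ x ∧ x ≤ f k := by
  have hn₁ : n ≠ 0 := by rintro rfl; linarith
  have hwit : x ≤ f (n - 1 + 1) := by rw [Nat.sub_add_cancel (by omega)]; exact hn.le
  have hex : ∃ k, x ≤ f (k + 1) := ⟨n - 1, hwit⟩
  have hle := Nat.find_min' hex hwit
  refine ⟨Nat.find hex + 1, by omega, by omega, ?_, Nat.find_spec hex⟩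
  · rw [Nat.add_sub_cancel]
    cases hk : Nat.find hex with
    | zero => exact h₀
    | succ k => exact (not_le.mp (Nat.find_min hex (show k < Nat.find hex by omega))).le

namespace NewtonDiagram

variable {n : ℕ} {P Q : ℕ → ℤ}

def edgeWidth (P : ℕ → ℤ) (k : ℕ) : ℤ := P k - P (k - 1)

def edgeHeight (Q : ℕ → ℤ) (k : ℕ) : ℤ := Q (k - 1) - Q k

def edgeSlope (P Q : ℕ → ℤ) (k : ℕ) : ℚ := edgeHeight Q k / edgeWidth P k

def edgeForm (P Q : ℕ → ℤ) (k : ℕ) (x : ℝ × ℝ) : ℝ := edgeHeight Q k * x.1 + edgeWidth P k * x.2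

def vertices (n : ℕ) (P Q : ℕ → ℤ) : Set (ℝ × ℝ) := {x | ∃ i ≤ n, x = ((P i : ℝ), (Q i : ℝ))}

def gammaPlus (n : ℕ) (P Q : ℕ → ℤ) : Set (ℝ × ℝ) :=
  convexHull ℝ (vertices n P Q) + Ici 0 ×ˢ Ici 0

lemma gammaMinus_eq : gammaMinus n P Q = closure (Ici 0 ×ˢ Ici 0 \ gammaPlus n P Q) := rfl

lemma edgeWidth_pos (hP : StrictMonoOn P (Iic n)) {k : ℕ} (hk : 1 ≤ k) (hkn : k ≤ n) :
    0 < edgeWidth P k :=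
  sub_pos.2 <| hP (by simp only [mem_Iic]; omega) (by simpa) (by omega)

lemma edgeHeight_pos (hQ : StrictAntiOn Q (Iic n)) {k : ℕ} (hk : 1 ≤ k) (hkn : k ≤ n) :
    0 < edgeHeight Q k :=
  sub_pos.2 <| hQ (by simp only [mem_Iic]; omega) (by simpa) (by omega)

lemma edgeSlope_antitoneOn
    (hconv : ∀ i, 1 ≤ i → i < n →
      ((Q (i - 1) - Q i : ℤ) : ℚ) / ((P i - P (i - 1) : ℤ) : ℚ) >
        ((Q i - Q (i + 1) : ℤ) : ℚ) / ((P (i + 1) - P i : ℤ) : ℚ)) :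
    AntitoneOn (edgeSlope P Q) (Icc 1 n) :=
  antitoneOn_of_succ_le ordConnected_Icc fun a _ ha ha' => by
    rw [Nat.succ_eq_succ, mem_Icc] at ha'
    have h := hconv a ha.1 ha'.2
    simp only [edgeSlope, edgeWidth, edgeHeight]
    exact h.le

lemma edgeHeight_mul_edgeWidth_le (hP : StrictMonoOn P (Iic n))
    (hslope : AntitoneOn (edgeSlope P Q) (Icc 1 n)) {j k : ℕ} (hj : 1 ≤ j) (hjk : j ≤ k)
    (hkn : k ≤ n) :
    edgeHeight Q k * edgeWidth P j ≤ edgeHeight Q j * edgeWidth P k := by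
  have h := hslope ⟨hj, hjk.trans hkn⟩ ⟨hj.trans hjk, hkn⟩ hjk
  rw [edgeSlope, edgeSlope, div_le_div_iff₀ (by exact_mod_cast edgeWidth_pos hP (hj.trans hjk) hkn)
    (by exact_mod_cast edgeWidth_pos hP hj (hjk.trans hkn))] at h
  exact_mod_cast h

lemma edgeForm_le_edgeForm_vertex (hP : StrictMonoOn P (Iic n))
    (hslope : AntitoneOn (edgeSlope P Q) (Icc 1 n)) {k m : ℕ} (hk : 1 ≤ k) (hkn : k ≤ n)
    (hmn : m ≤ n) :
    edgeForm P Q k (P k, Q k) ≤ edgeForm P Q k (P m, Q m) := by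
  -- Along the vertices, `f` decreases up to `k` and increases from `k` on, since slopes decrease.
  set f : ℕ → ℤ := fun m => edgeHeight Q k * P m + edgeWidth P k * Q m
  have hstep : ∀ a, f (a + 1) - f a =
      edgeHeight Q k * edgeWidth P (a + 1) - edgeHeight Q (a + 1) * edgeWidth P k := by
    intro a
    simp only [f, edgeWidth, edgeHeight, Nat.add_sub_cancel]
    ring
  have hdown : AntitoneOn f (Iic k) := antitoneOn_of_succ_le ordConnected_Iic fun a _ _ ha => by
    simp only [Nat.succ_eq_succ, Nat.succ_eq_add_one, mem_Iic] at ha ⊢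
    have := edgeHeight_mul_edgeWidth_le hP hslope (Nat.le_add_left 1 a) ha hkn
    linarith [hstep a]
  have hup : MonotoneOn f (Icc k n) := monotoneOn_of_le_succ ordConnected_Icc fun a _ ha ha' => by
    simp only [Nat.succ_eq_succ, Nat.succ_eq_add_one, mem_Icc] at ha' ⊢
    have := edgeHeight_mul_edgeWidth_le hP hslope hk ha'.1 ha'.2
    linarith [hstep a]
  have hfm : f k ≤ f m := by
    rcases le_total m k with hmk | hkm
    · exact hdown (mem_Iic.2 hmk) (mem_Iic.2 le_rfl) hmk
    · exact hup ⟨le_rfl, hkn⟩ ⟨hkm, hmn⟩ hkm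
  simp only [edgeForm]
  exact_mod_cast hfm

lemma edgeForm_prev_vertex (k : ℕ) :
    edgeForm P Q k (P (k - 1), Q (k - 1)) = edgeForm P Q k (P k, Q k) := by
  simp only [edgeForm, edgeWidth, edgeHeight]
  push_cast
  ring

lemma edgeForm_strictMono (hP : StrictMonoOn P (Iic n)) (hQ : StrictAntiOn Q (Iic n)) {k : ℕ}
    (hk : 1 ≤ k) (hkn : k ≤ n) : StrictMono (edgeForm P Q k) :=
  strictMono_linear_form (by exact_mod_cast edgeHeight_pos hQ hk hkn)
    (by exact_mod_cast edgeWidth_pos hP hk hkn)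

lemma edgeForm_le_of_mem_gammaPlus (hP : StrictMonoOn P (Iic n)) (hQ : StrictAntiOn Q (Iic n))
    (hslope : AntitoneOn (edgeSlope P Q) (Icc 1 n)) {k : ℕ} (hk : 1 ≤ k) (hkn : k ≤ n)
    {x : ℝ × ℝ} (hx : x ∈ gammaPlus n P Q) :
    edgeForm P Q k (P k, Q k) ≤ edgeForm P Q k x := by
  have hconvex : Convex ℝ {x | edgeForm P Q k (P k, Q k) ≤ edgeForm P Q k x} :=
    convex_halfSpace_ge ⟨fun x y => by simp only [edgeForm, Prod.fst_add, Prod.snd_add]; ring,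
      fun c x => by simp only [edgeForm, Prod.smul_fst, Prod.smul_snd, smul_eq_mul]; ring⟩ _
  obtain ⟨u, hu, v, hv, rfl⟩ := hx
  have hvert : vertices n P Q ⊆ {x | edgeForm P Q k (P k, Q k) ≤ edgeForm P Q k x} := by
    rintro _ ⟨m, hm, rfl⟩
    exact edgeForm_le_edgeForm_vertex hP hslope hk hkn hm
  exact (convexHull_min hvert hconvex hu).trans <|
    (edgeForm_strictMono hP hQ hk hkn).monotone <| le_add_of_nonneg_right hv

lemma mem_gammaPlus_of_forall_le (hP : StrictMonoOn P (Iic n)) (hP0 : P 0 = 0) (hQn : Q n = 0)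
    {x : ℝ × ℝ} (hx : x ∈ Ici 0 ×ˢ Ici 0)
    (hle : ∀ k, 1 ≤ k → k ≤ n → edgeForm P Q k (P k, Q k) ≤ edgeForm P Q k x) :
    x ∈ gammaPlus n P Q := by
  rcases le_or_gt (P n : ℝ) x.1 with hxn | hxn
  · refine ⟨(P n, 0), subset_convexHull ℝ _ ⟨n, le_rfl, by rw [hQn, Int.cast_zero]⟩,
      (x.1 - P n, x.2), ⟨sub_nonneg.2 hxn, hx.2⟩, by simp⟩
  obtain ⟨k, hk, hkn, hk₁, hk₂⟩ :=
    exists_le_le_of_lt (f := fun m => (P m : ℝ)) (by simpa [hP0] using hx.1) hxn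
  have hseg : segment ℝ ((P (k - 1) : ℝ), (Q (k - 1) : ℝ)) ((P k : ℝ), (Q k : ℝ)) ⊆
      convexHull ℝ (vertices n P Q) :=
    segment_subset_convexHull ⟨k - 1, by omega, rfl⟩ ⟨k, hkn, rfl⟩
  refine add_subset_add_right hseg (mem_segment_add_quadrant ?_ hk₁ hk₂ ?_)
  · show (P (k - 1) : ℝ) < P k
    exact_mod_cast sub_pos.1 (edgeWidth_pos hP hk hkn)
  · have := edgeForm_prev_vertex (P := P) (Q := Q) k ▸ hle k hk hkn
    simpa [edgeForm, edgeWidth, edgeHeight] using this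

lemma gammaMinus_subset (hP : StrictMonoOn P (Iic n)) (hP0 : P 0 = 0) (hQn : Q n = 0) :
    gammaMinus n P Q ⊆
      ⋃ k ∈ Finset.Icc 1 n, {x | edgeForm P Q k x ≤ edgeForm P Q k (P k, Q k)} := by
  refine closure_minimal (fun x ⟨hx, hxΓ⟩ => ?_) <|
    isClosed_biUnion_finset fun k _ => isClosed_le (by unfold edgeForm; fun_prop) continuous_const
  by_contra! h
  simp only [mem_iUnion, Finset.mem_Icc, not_exists] at h
  exact hxΓ <| mem_gammaPlus_of_forall_le hP hP0 hQn hx fun k hk hkn =>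
    (not_le.1 (h k ⟨hk, hkn⟩)).le

lemma unitSq_subset_gammaMinus (hP : StrictMonoOn P (Iic n)) (hQ : StrictAntiOn Q (Iic n))
    (hslope : AntitoneOn (edgeSlope P Q) (Icc 1 n)) (hP0 : P 0 = 0) (hQn : Q n = 0) {s : ℕ}
    (hs : 1 ≤ s) (hsn : s < n) :
    unitSq (P s - 1) (Q s - 1) ⊆ gammaMinus n P Q := by
  have hPs : (1 : ℝ) ≤ P s := by
    exact_mod_cast hP0 ▸ hP (by simp) (mem_Iic.2 hsn.le) (by omega : 0 < s)
  have hQs : (1 : ℝ) ≤ Q s := by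
    exact_mod_cast hQn ▸ hQ (mem_Iic.2 hsn.le) (by simp) hsn
  have hbox : Ioo (P s - 1 : ℝ) (P s) ×ˢ Ioo (Q s - 1 : ℝ) (Q s) ⊆
      Ici 0 ×ˢ Ici 0 \ gammaPlus n P Q := by
    rintro x ⟨⟨hx₁, hx₁'⟩, hx₂, hx₂'⟩
    refine ⟨⟨(by linarith : (0 : ℝ) ≤ x.1), (by linarith : (0 : ℝ) ≤ x.2)⟩, fun hx => ?_⟩
    have hlt := edgeForm_strictMono hP hQ (k := s + 1) (by omega) hsn
      (Prod.lt_of_lt_of_le hx₁' hx₂'.le : x < ((P s : ℝ), (Q s : ℝ)))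
    have := edgeForm_le_of_mem_gammaPlus hP hQ hslope (by omega) hsn hx
    rw [← edgeForm_prev_vertex, Nat.succ_sub_one] at this
    exact hlt.not_ge this
  rw [gammaMinus_eq, unitSq]
  refine (closure_mono hbox).trans' (subset_of_eq ?_)
  rw [closure_prod_eq, closure_Ioo (by linarith), closure_Ioo (by linarith)]
  push_cast
  simp only [sub_add_cancel]

lemma exists_eq_of_lattice_mem_newtonBoundary
    (hgcd : ∀ i, 1 ≤ i → i ≤ n → Int.gcd (P i - P (i - 1)) (Q (i - 1) - Q i) = 1) {a b : ℤ}
    (h : ((a : ℝ), (b : ℝ)) ∈ newtonBoundary n P Q) : ∃ s ≤ n, a = P s ∧ b = Q s := by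
  simp only [newtonBoundary, mem_iUnion, Finset.mem_Icc] at h
  obtain ⟨k, ⟨hk, hkn⟩, hseg⟩ := h
  have hgcd' : Int.gcd (P k - P (k - 1)) (Q k - Q (k - 1)) = 1 := by
    rw [← neg_sub (Q (k - 1)), Int.gcd_neg]
    exact hgcd k hk hkn
  rcases eq_or_eq_of_lattice_mem_segment hgcd' hseg with h | h
  · exact ⟨k - 1, by omega, h⟩
  · exact ⟨k, hkn, h⟩

lemma exists_eq_corner_of_unitSq_subset (hP : StrictMonoOn P (Iic n))
    (hQ : StrictAntiOn Q (Iic n)) (hslope : AntitoneOn (edgeSlope P Q) (Icc 1 n))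
    (hP0 : P 0 = 0) (hQn : Q n = 0)
    (hgcd : ∀ i, 1 ≤ i → i ≤ n → Int.gcd (P i - P (i - 1)) (Q (i - 1) - Q i) = 1) {i j : ℤ}
    (hsq : unitSq i j ⊆ gammaMinus n P Q)
    (hv : (unitSqVertices i j ∩ newtonBoundary n P Q).Nonempty) :
    ∃ s ≤ n, P s = i + 1 ∧ Q s = j + 1 := by
  set c : ℝ × ℝ := ((i : ℝ) + 1, (j : ℝ) + 1)
  have hc : c ∈ gammaMinus n P Q := hsq ⟨⟨by simp [c], le_rfl⟩, ⟨by simp [c], le_rfl⟩⟩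
  obtain ⟨k, hk, hck⟩ := mem_iUnion₂.1 (gammaMinus_subset hP hP0 hQn hc)
  rw [Finset.mem_Icc] at hk
  obtain ⟨v, hv, hvΓ⟩ := hv
  obtain ⟨a, b, rfl, hvc⟩ : ∃ a b : ℤ, v = ((a : ℝ), (b : ℝ)) ∧ ((a : ℝ), (b : ℝ)) ≤ c := by
    simp only [unitSqVertices, mem_insert_iff, mem_singleton_iff] at hv
    rcases hv with rfl | rfl | rfl | rfl
    · exact ⟨i, j, rfl, by simp [c, Prod.le_def]⟩
    · exact ⟨i + 1, j, by push_cast; rfl, by simp [c, Prod.le_def]⟩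
    · exact ⟨i, j + 1, by push_cast; rfl, by simp [c, Prod.le_def]⟩
    · exact ⟨i + 1, j + 1, by push_cast; rfl, by push_cast; rfl⟩
  obtain ⟨s, hsn, rfl, rfl⟩ := exists_eq_of_lattice_mem_newtonBoundary hgcd hvΓ
  -- The corner `c` lies weakly below the `k`-th edge line, the vertex `(P s, Q s)` weakly above.
  have hvc' : ((P s : ℝ), (Q s : ℝ)) = c := by
    by_contra hne
    have := edgeForm_strictMono hP hQ hk.1 hk.2 (hvc.lt_of_ne hne)
    exact this.not_ge (hck.trans (edgeForm_le_edgeForm_vertex hP hslope hk.1 hk.2 hsn))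
  simp only [c, Prod.mk.injEq] at hvc'
  exact ⟨s, hsn, by exact_mod_cast hvc'.1, by exact_mod_cast hvc'.2⟩

def IsSpecialSquare (n : ℕ) (P Q : ℕ → ℤ) (i j : ℤ) : Prop :=
  unitSq i j ⊆ gammaMinus n P Q ∧ (unitSqVertices i j ∩ newtonBoundary n P Q).Nonempty

lemma isSpecialSquare_iff (hP : StrictMonoOn P (Iic n)) (hQ : StrictAntiOn Q (Iic n))
    (hslope : AntitoneOn (edgeSlope P Q) (Icc 1 n)) (hP0 : P 0 = 0) (hQn : Q n = 0)
    (hgcd : ∀ i, 1 ≤ i → i ≤ n → Int.gcd (P i - P (i - 1)) (Q (i - 1) - Q i) = 1) (i j : ℕ) :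
    IsSpecialSquare n P Q i j ↔ ∃ s ∈ Icc 1 (n - 1), P s = i + 1 ∧ Q s = j + 1 := by
  constructor
  · rintro ⟨hsq, hv⟩
    obtain ⟨s, hsn, hPs, hQs⟩ := exists_eq_corner_of_unitSq_subset hP hQ hslope hP0 hQn hgcd hsq hv
    have hs : s ≠ 0 := by rintro rfl; omega
    have hsn' : s ≠ n := by rintro rfl; omega
    exact ⟨s, ⟨by omega, by omega⟩, hPs, hQs⟩
  · rintro ⟨s, ⟨hs, hsn⟩, hPs, hQs⟩
    have hi : (i : ℤ) = P s - 1 := by omega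
    have hj : (j : ℤ) = Q s - 1 := by omega
    refine ⟨hi ▸ hj ▸ unitSq_subset_gammaMinus hP hQ hslope hP0 hQn hs (by omega), (P s, Q s),
      ?_, ?_⟩
    · simp [unitSqVertices, hPs, hQs]
    · simp only [newtonBoundary, mem_iUnion, Finset.mem_Icc]
      exact ⟨s, ⟨hs, by omega⟩, right_mem_segment ℝ _ _⟩

end NewtonDiagram

open NewtonDiagram in
theorem num_squares_meeting_boundary_general (n : ℕ) (P Q : ℕ → ℤ)
    (hP0 : P 0 = 0) (hQn : Q n = 0)
    (hPmono : ∀ i < n, P i < P (i + 1))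
    (hQmono : ∀ i < n, Q (i + 1) < Q i)
    (hconv : ∀ i, 1 ≤ i → i < n →
      ((Q (i - 1) - Q i : ℤ) : ℚ) / ((P i - P (i - 1) : ℤ) : ℚ) >
        ((Q i - Q (i + 1) : ℤ) : ℚ) / ((P (i + 1) - P i : ℤ) : ℚ))
    (hgcd : ∀ i, 1 ≤ i → i ≤ n → Int.gcd (P i - P (i - 1)) (Q (i - 1) - Q i) = 1) :
    {ij : ℕ × ℕ | unitSq ij.1 ij.2 ⊆ gammaMinus n P Q ∧
        (unitSqVertices ij.1 ij.2 ∩ newtonBoundary n P Q).Nonempty}.ncard = n - 1 := by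
  have hP : StrictMonoOn P (Iic n) := strictMonoOn_Iic_of_lt_succ hPmono
  have hQ : StrictAntiOn Q (Iic n) := strictAntiOn_Iic_of_succ_lt hQmono
  have hpos : ∀ s ∈ Icc 1 (n - 1), 0 < P s ∧ 0 < Q s := fun s ⟨hs, hsn⟩ =>
    ⟨hP0 ▸ hP (by simp) (mem_Iic.2 (by omega)) (by omega),
      hQn ▸ hQ (mem_Iic.2 (by omega)) (by simp) (by omega)⟩
  have hset : {ij : ℕ × ℕ | IsSpecialSquare n P Q ij.1 ij.2} =
      (fun s => ((P s - 1).toNat, (Q s - 1).toNat)) '' Icc 1 (n - 1) := by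
    ext ⟨i, j⟩
    refine (isSpecialSquare_iff hP hQ (edgeSlope_antitoneOn hconv) hP0 hQn hgcd i j).trans <|
      exists_congr fun s => and_congr_right fun hs => ?_
    have := hpos s hs
    simp only [Prod.mk.injEq]
    omega
  have hinj : InjOn (fun s => ((P s - 1).toNat, (Q s - 1).toNat)) (Icc 1 (n - 1)) := by
    intro s hs t ht hst
    have := hpos s hs
    have := hpos t ht
    simp only [Prod.mk.injEq] at hst
    exact hP.injOn (mem_Iic.2 (hs.2.trans (n.sub_le 1))) (mem_Iic.2 (ht.2.trans (n.sub_le 1)))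
      (by omega)
  change {ij : ℕ × ℕ | IsSpecialSquare n P Q ij.1 ij.2}.ncard = n - 1
  rw [hset, hinj.ncard_image, ncard_Icc_nat]
  omega

/-- For a Newton diagram datum with `gcd(pᵢ,qᵢ) = 1`, the number of unit lattice squares
with nonnegative-integer corner contained in `Γ₋` having at least one vertex on the
Newton boundary `Γ` equals `n - 1`. -/
theorem num_squares_meeting_boundary (n : ℕ) (hn : 1 ≤ n) (P Q : ℕ → ℤ)
    (hP0 : P 0 = 0) (hQn : Q n = 0)
    (hPmono : ∀ i < n, P i < P (i + 1))
    (hQmono : ∀ i < n, Q (i + 1) < Q i)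
    (hconv : ∀ i, 1 ≤ i → i < n →
      ((Q (i - 1) - Q i : ℤ) : ℚ) / ((P i - P (i - 1) : ℤ) : ℚ) >
        ((Q i - Q (i + 1) : ℤ) : ℚ) / ((P (i + 1) - P i : ℤ) : ℚ))
    (hgcd : ∀ i, 1 ≤ i → i ≤ n → Int.gcd (P i - P (i - 1)) (Q (i - 1) - Q i) = 1) :
    {ij : ℕ × ℕ | unitSq ij.1 ij.2 ⊆ gammaMinus n P Q ∧
        (unitSqVertices ij.1 ij.2 ∩ newtonBoundary n P Q).Nonempty}.ncard = n - 1 :=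
  num_squares_meeting_boundary_general n P Q hP0 hQn hPmono hQmono hconv hgcd
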